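/- Let p(x) = p̃(x)/Z be the pairwise Markov random field on the tree T, where p̃(x) = ∏_{{i,j}∈E(T)} ψ_{ij}(x_i, x_j) and Z = Σ_x p̃(x). Then the Bethe free energy evaluated at the exact marginals of p (i.e., with beliefs b_i = p_i and b_{ij} = p_{ij}) equals the negative log-partition function: F_B = -ln Z. -/

import Mathlib

open Finset

variable {V : Type*} [Fintype V] [DecidableEq V]
  {X : V → Type*} [∀ i, Fintype (X i)] [∀ i, DecidableEq (X i)]

/-- The single-variable marginal `p_i(s) = Σ_{x : x_i = s} p(x)`. -/
noncomputable def marg1 (p : ((i : V) → X i) → ℝ) (i : V) (s : X i) : ℝ :=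
  ∑ x ∈ Finset.univ.filter (fun x : (i : V) → X i => x i = s), p x

/-- The pairwise marginal `p_{ij}(s,t) = Σ_{x : x_i = s, x_j = t} p(x)`. -/
noncomputable def marg2 (p : ((i : V) → X i) → ℝ) (i j : V) (s : X i) (t : X j) : ℝ :=
  ∑ x ∈ Finset.univ.filter (fun x : (i : V) → X i => x i = s ∧ x j = t), p x

theorem marg2_symm (p : ((i : V) → X i) → ℝ) (i j : V) (s : X i) (t : X j) :
    marg2 p i j s t = marg2 p j i t s := by
  unfold marg2
  exact Finset.sum_congr (by ext x; simp [and_comm]) fun _ _ => rfl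

/-- The per-edge Bethe term `Σ_{s,t} b_{ij}(s,t) · ln (b_{ij}(s,t) / ψ_{ij}(s,t))`
is a symmetric function of the (ordered) edge, hence descends to `Sym2 V`. -/
theorem betheEdgeTerm_symm {V : Type*} {X : V → Type*} [∀ i, Fintype (X i)]
    (b2 ψ2 : (i j : V) → X i → X j → ℝ)
    (hbsym : ∀ i j s t, b2 i j s t = b2 j i t s)
    (hψsym : ∀ i j s t, ψ2 i j s t = ψ2 j i t s) (i j : V) :
    (∑ s : X i, ∑ t : X j, b2 i j s t * Real.log (b2 i j s t / ψ2 i j s t))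
      = ∑ t : X j, ∑ s : X i, b2 j i t s * Real.log (b2 j i t s / ψ2 j i t s) := by
  rw [Finset.sum_comm]
  exact Finset.sum_congr rfl fun t _ => Finset.sum_congr rfl fun s _ => by
    rw [hbsym, hψsym]

/-- The Bethe free energy of a belief system `(b1, b2)` relative to edge
potentials `ψ2` on the tree `T`. -/
noncomputable def betheFreeEnergy (T : SimpleGraph V) [DecidableRel T.Adj]
    (b1 : (i : V) → X i → ℝ) (b2 ψ2 : (i j : V) → X i → X j → ℝ)
    (hbsym : ∀ i j s t, b2 i j s t = b2 j i t s)
    (hψsym : ∀ i j s t, ψ2 i j s t = ψ2 j i t s) : ℝ :=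
  (∑ e ∈ T.edgeFinset,
      Sym2.lift ⟨fun i j => ∑ s : X i, ∑ t : X j,
          b2 i j s t * Real.log (b2 i j s t / ψ2 i j s t),
        betheEdgeTerm_symm b2 ψ2 hbsym hψsym⟩ e)
    - ∑ i : V, ((T.degree i : ℝ) - 1) * ∑ s : X i, b1 i s * Real.log (b1 i s)

/-!
On a forest, a normalized pairwise Markov random field `p` with one-site marginals `pᵢ` and
pair marginals `pᵢⱼ` factorizes as `p x · ∏ᵢ pᵢ(xᵢ) ^ deg i = ∏_{ij} pᵢⱼ(xᵢ, xⱼ) · ∏ᵢ pᵢ(xᵢ)`.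
Induct on the edges: if `ℓ` is a leaf with neighbour `u`, then `x_ℓ` is independent of the
other coordinates given `x_u`, i.e. `p(x) p_u(x_u) = p_{ℓu}(x_ℓ, x_u) p_{-ℓ}(x)` with `p_{-ℓ}`
the marginal of the coordinates other than `ℓ`; and `p_ℓ ⊗ p_{-ℓ}` is a field on the forest
without the edge `ℓu` with the same one-site marginals and the same pair marginals away
from `ℓ`. Taking logarithms and averaging against `p`, the Bethe free energy at the marginals
of `p` becomes the Gibbs free energy `∑ₓ p log (p / p̃)`, which is `-log Z` for `p = p̃ / Z`.
-/

namespace SimpleGraph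

theorem IsAcyclic.exists_leaf_edge {G : SimpleGraph V} [DecidableRel G.Adj]
    (hG : G.IsAcyclic) (hE : G.edgeFinset.Nonempty) :
    ∃ ℓ u, s(ℓ, u) ∈ G.edgeFinset ∧ ∀ e ∈ G.edgeFinset.erase s(ℓ, u), ℓ ∉ e := by
  obtain ⟨e, he⟩ := hE
  have : Nonempty V := ⟨e.out.1⟩
  obtain ⟨u, v, p, hp, hmax⟩ := Walk.exists_isPath_forall_isPath_length_le_length G
  have hnil : ¬p.Nil := by
    induction e using Sym2.ind with
    | _ a b =>
      have hab : G.Adj a b := by simpa using he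
      have := hmax a b (.cons hab .nil) (by simp [hab.ne])
      grind [Walk.length_cons, Walk.length_nil]
  refine ⟨u, p.snd, mem_edgeFinset.mpr (p.adj_snd hnil), fun e he hue => ?_⟩
  obtain ⟨hne, he⟩ := mem_erase.mp he
  obtain ⟨w, rfl⟩ := Sym2.mem_iff_exists.mp hue
  have huw : G.Adj u w := by simpa using he
  have hw : w ∈ p.support := by
    by_contra hw
    have := hmax _ _ (p.cons huw.symm) (hp.cons hw)
    simp at this
  exact hne (by rw [hG.eq_snd_of_adj_start hp huw hw])

theorem prod_pow_degree {M : Type*} [CommMonoid M] (G : SimpleGraph V) [DecidableRel G.Adj]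
    (f : V → M) :
    ∏ v, f v ^ G.degree v =
      ∏ e ∈ G.edgeFinset, Sym2.lift ⟨fun a b => f a * f b, fun _ _ => mul_comm _ _⟩ e := by
  calc ∏ v, f v ^ G.degree v = ∏ v, ∏ e ∈ G.edgeFinset with v ∈ e, f v := by
        simp [← card_incidenceFinset_eq_degree, incidenceFinset_eq_filter]
    _ = ∏ e ∈ G.edgeFinset, ∏ v with v ∈ e, f v := prod_comm' (by simp [and_comm])
    _ = _ := prod_congr rfl fun e he => by
        induction e using Sym2.ind with
        | _ a b =>
          have hab : a ≠ b := (mem_edgeFinset.mp he).ne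
          rw [Sym2.lift_mk]
          show _ = f a * f b
          rw [← prod_pair hab]
          exact prod_congr (by ext; simp) fun _ _ => rfl

theorem edgeFinset_deleteEdges_singleton (G : SimpleGraph V) [DecidableRel G.Adj] (e : Sym2 V)
    [DecidableRel (G.deleteEdges {e}).Adj] :
    (G.deleteEdges {e}).edgeFinset = G.edgeFinset.erase e := by
  ext
  simp [and_comm]

theorem prod_pow_degree_eq_mul_prod_pow_degree_deleteEdges {M : Type*} [CommMonoid M]
    (G : SimpleGraph V) [DecidableRel G.Adj] {a b : V} (he : s(a, b) ∈ G.edgeFinset)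
    [DecidableRel (G.deleteEdges {s(a, b)}).Adj] (f : V → M) :
    ∏ v, f v ^ G.degree v = f a * f b * ∏ v, f v ^ (G.deleteEdges {s(a, b)}).degree v := by
  rw [prod_pow_degree, prod_pow_degree, edgeFinset_deleteEdges_singleton, ← mul_prod_erase _ _ he]
  rfl

end SimpleGraph

open Function

noncomputable def sumOut (ℓ : V) (p : ((i : V) → X i) → ℝ) (x : (i : V) → X i) : ℝ :=
  ∑ b, p (update x ℓ b)

section SumOut

omit [Fintype V]

variable {ℓ : V} {A : Finset ((i : V) → X i)}

omit [∀ i, Fintype (X i)] in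
theorem sum_filter_update_eq (hA : ∀ x ∈ A, ∀ b, update x ℓ b ∈ A)
    (f : ((i : V) → X i) → ℝ) (s b : X ℓ) :
    ∑ x ∈ A with x ℓ = s, f (update x ℓ b) = ∑ x ∈ A with x ℓ = b, f x := by
  refine sum_nbij' (update · ℓ b) (update · ℓ s) ?_ ?_ ?_ ?_ fun _ _ => rfl <;>
    simp +contextual [hA]

theorem sum_filter_sumOut (hA : ∀ x ∈ A, ∀ b, update x ℓ b ∈ A)
    (p : ((i : V) → X i) → ℝ) (s : X ℓ) :
    ∑ x ∈ A with x ℓ = s, sumOut ℓ p x = ∑ x ∈ A, p x := by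
  simp only [sumOut]
  rw [sum_comm, ← sum_fiberwise A (· ℓ) p]
  exact sum_congr rfl fun b _ => sum_filter_update_eq hA p s b

theorem sum_mul_sumOut (hA : ∀ x ∈ A, ∀ b, update x ℓ b ∈ A)
    (w : X ℓ → ℝ) (p : ((i : V) → X i) → ℝ) :
    ∑ x ∈ A, w (x ℓ) * sumOut ℓ p x = (∑ b, w b) * ∑ x ∈ A, p x := by
  rw [← sum_fiberwise A (· ℓ), sum_mul]
  refine sum_congr rfl fun s _ => ?_
  rw [← sum_filter_sumOut hA p s, mul_sum]
  exact sum_congr rfl fun x hx => by rw [(mem_filter.mp hx).2]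

theorem sum_filter_mul_sum_eq_mul_sum {a : X ℓ → ℝ} {p R : ((i : V) → X i) → ℝ}
    (hA : ∀ x ∈ A, ∀ b, update x ℓ b ∈ A) (hp : ∀ x ∈ A, p x = a (x ℓ) * R x)
    (hR : ∀ x b, R (update x ℓ b) = R x) (s : X ℓ) :
    (∑ x ∈ A with x ℓ = s, p x) * ∑ b, a b = a s * ∑ x ∈ A, p x := by
  rw [← sum_filter_sumOut hA p s, sum_mul, mul_sum]
  refine sum_congr rfl fun x hx => ?_
  obtain ⟨hxA, rfl⟩ := mem_filter.mp hx
  simp only [sumOut, hp x hxA, hp _ (hA x hxA _), hR, update_self, ← sum_mul]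
  ring

omit [∀ i, DecidableEq (X i)] in
theorem sumOut_eq_mul {ℓ u : V} (hu : u ≠ ℓ) {a : X ℓ → X u → ℝ}
    {p R : ((i : V) → X i) → ℝ} (hp : ∀ x, p x = a (x ℓ) (x u) * R x)
    (hR : ∀ x b, R (update x ℓ b) = R x) (x : (i : V) → X i) :
    sumOut ℓ p x = (∑ b, a b (x u)) * R x := by
  simp [sumOut, hp, update_of_ne hu, hR, sum_mul]

end SumOut

section Marginals

variable (p : ((i : V) → X i) → ℝ)

theorem sum_marg1 (i : V) : ∑ s, marg1 p i s = ∑ x, p x := by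
  simp only [marg1]
  exact sum_fiberwise univ (fun x : (i : V) → X i => x i) p

theorem sum_marg1_mul (i : V) (f : X i → ℝ) :
    ∑ s, marg1 p i s * f s = ∑ x, p x * f (x i) := by
  simp only [marg1, sum_mul]
  rw [← sum_fiberwise univ (fun x : (i : V) → X i => x i)]
  exact sum_congr rfl fun s _ => sum_congr rfl fun x hx => by rw [(mem_filter.mp hx).2]

theorem sum_marg2_mul (i j : V) (f : X i → X j → ℝ) :
    ∑ s, ∑ t, marg2 p i j s t * f s t = ∑ x, p x * f (x i) (x j) := by
  simp only [marg2, sum_mul]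
  rw [← sum_fiberwise univ (fun x : (i : V) → X i => x i)]
  refine sum_congr rfl fun s _ => ?_
  rw [← sum_fiberwise _ (fun x : (i : V) → X i => x j)]
  refine sum_congr rfl fun t _ => ?_
  rw [filter_filter]
  exact sum_congr rfl fun x hx => by rw [(mem_filter.mp hx).2.1, (mem_filter.mp hx).2.2]

variable {p}

theorem marg1_pos (hp : ∀ x, 0 < p x) (i : V) (x : (i : V) → X i) : 0 < marg1 p i (x i) :=
  sum_pos (fun y _ => hp y) ⟨x, by simp⟩

theorem marg2_pos (hp : ∀ x, 0 < p x) (i j : V) (x : (i : V) → X i) :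
    0 < marg2 p i j (x i) (x j) :=
  sum_pos (fun y _ => hp y) ⟨x, by simp⟩

theorem mul_marg1_eq_marg2_mul_sumOut {ℓ u : V} (hu : u ≠ ℓ) {a : X ℓ → X u → ℝ}
    {R : ((i : V) → X i) → ℝ} (hp : ∀ x, p x = a (x ℓ) (x u) * R x)
    (hR : ∀ x b, R (update x ℓ b) = R x) (x : (i : V) → X i) :
    p x * marg1 p u (x u) = marg2 p ℓ u (x ℓ) (x u) * sumOut ℓ p x := by
  have hsumOut := sumOut_eq_mul hu hp hR x
  have hmarg2 : marg2 p ℓ u (x ℓ) (x u) =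
      ∑ y ∈ univ.filter (fun y : (i : V) → X i => y u = x u) with y ℓ = x ℓ, p y := by
    rw [marg2, filter_filter]
    exact sum_congr (filter_congr fun _ _ => and_comm) fun _ _ => rfl
  have key := sum_filter_mul_sum_eq_mul_sum (p := p) (a := (a · (x u)))
    (A := univ.filter fun y : (i : V) → X i => y u = x u)
    (fun y hy b => by simpa [update_of_ne hu] using hy)
    (fun y hy => by rw [hp, (mem_filter.mp hy).2]) hR (x ℓ)
  rw [← hmarg2] at key
  rw [hsumOut, hp x, marg1]
  linear_combination (-R x) * key

variable (p) (ℓ : V)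

noncomputable def decouple (x : (i : V) → X i) : ℝ :=
  marg1 p ℓ (x ℓ) * sumOut ℓ p x

variable {p ℓ}

theorem sum_decouple (hp : ∑ x, p x = 1) : ∑ x, decouple p ℓ x = 1 := by
  simp only [decouple]
  rw [sum_mul_sumOut (by simp) (marg1 p ℓ), sum_marg1, hp, one_mul]

theorem marg1_decouple (hp : ∑ x, p x = 1) (i : V) (s : X i) :
    marg1 (decouple p ℓ) i s = marg1 p i s := by
  rw [marg1]
  simp only [decouple]
  by_cases hi : i = ℓ
  · subst hi
    rw [sum_congr rfl fun x hx => by rw [(mem_filter.mp hx).2], ← mul_sum,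
      sum_filter_sumOut (by simp), hp, mul_one]
  · rw [sum_mul_sumOut (by simp +contextual [update_of_ne hi]) (marg1 p ℓ), sum_marg1, hp,
      one_mul, marg1]

theorem marg2_decouple_of_ne (hp : ∑ x, p x = 1) {i j : V} (hi : i ≠ ℓ) (hj : j ≠ ℓ)
    (s : X i) (t : X j) : marg2 (decouple p ℓ) i j s t = marg2 p i j s t := by
  rw [marg2]
  simp only [decouple]
  rw [sum_mul_sumOut (by simp +contextual [update_of_ne hi, update_of_ne hj]) (marg1 p ℓ),
    sum_marg1, hp, one_mul, marg2]

end Marginals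

section EdgeValue

omit [Fintype V] [∀ i, Fintype (X i)] [∀ i, DecidableEq (X i)]

variable (f : (i j : V) → X i → X j → ℝ) (hf : ∀ i j s t, f i j s t = f j i t s)

def edgeValue (x : (i : V) → X i) : Sym2 V → ℝ :=
  Sym2.lift ⟨fun i j => f i j (x i) (x j), fun i j => hf i j (x i) (x j)⟩

omit [DecidableEq V] in
@[simp]
theorem edgeValue_mk (x : (i : V) → X i) (i j : V) :
    edgeValue f hf x s(i, j) = f i j (x i) (x j) :=
  rfl

theorem edgeValue_update_of_notMem {ℓ : V} {e : Sym2 V} (h : ℓ ∉ e) (x : (i : V) → X i)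
    (b : X ℓ) : edgeValue f hf (update x ℓ b) e = edgeValue f hf x e := by
  induction e using Sym2.ind with
  | _ i j =>
    obtain ⟨hi, hj⟩ : i ≠ ℓ ∧ j ≠ ℓ := by simpa [eq_comm] using h
    simp [update_of_ne hi, update_of_ne hj]

variable {f hf}

omit [DecidableEq V] in
theorem edgeValue_pos {x : (i : V) → X i} {e : Sym2 V}
    (h : ∀ i j, e = s(i, j) → 0 < f i j (x i) (x j)) : 0 < edgeValue f hf x e := by
  induction e using Sym2.ind with
  | _ i j => exact h i j rfl

omit [DecidableEq V] in
theorem edgeValue_pos_of_mem_edgeFinset [Fintype V] {G : SimpleGraph V} [DecidableRel G.Adj]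
    (hfpos : ∀ i j, G.Adj i j → ∀ s t, 0 < f i j s t) (x : (i : V) → X i) {e : Sym2 V}
    (he : e ∈ G.edgeFinset) : 0 < edgeValue f hf x e :=
  edgeValue_pos fun i j hij => hfpos i j (by simpa [hij] using he) _ _

end EdgeValue

theorem edgeValue_marg2_decouple {p : ((i : V) → X i) → ℝ} (hp : ∑ x, p x = 1) {ℓ : V}
    {e : Sym2 V} (he : ℓ ∉ e) (x : (i : V) → X i) :
    edgeValue (marg2 (decouple p ℓ)) (marg2_symm _) x e =
      edgeValue (marg2 p) (marg2_symm p) x e := by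
  induction e using Sym2.ind with
  | _ i j =>
    obtain ⟨hi, hj⟩ : i ≠ ℓ ∧ j ≠ ℓ := by simpa [eq_comm] using he
    exact marg2_decouple_of_ne hp hi hj _ _

omit [Fintype V] [∀ i, Fintype (X i)] [∀ i, DecidableEq (X i)] in
theorem prod_update_apply_of_mem {M : Type*} [CommMonoid M] (φ : (i : V) → X i → M) {k : V}
    (g : X k → M) {s : Finset V} (hk : k ∈ s) (x : (i : V) → X i) :
    ∏ i ∈ s, update φ k g i (x i) = g (x k) * ∏ i ∈ s.erase k, φ i (x i) := by
  rw [← mul_prod_erase s _ hk, update_self]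
  exact congrArg _ (prod_congr rfl fun i hi => by rw [update_of_ne (ne_of_mem_erase hi)])

section PairwiseMRF

variable (ψ2 : (i j : V) → X i → X j → ℝ) (hψ : ∀ i j s t, ψ2 i j s t = ψ2 j i t s)

noncomputable def pairwiseMRF (E : Finset (Sym2 V)) (c : ℝ) (φ : (i : V) → X i → ℝ)
    (x : (i : V) → X i) : ℝ :=
  c * (∏ e ∈ E, edgeValue ψ2 hψ x e) * ∏ i, φ i (x i)

variable {ψ2 hψ} (E : Finset (Sym2 V)) (c : ℝ) (φ : (i : V) → X i → ℝ)

section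

omit [∀ i, Fintype (X i)] [∀ i, DecidableEq (X i)]

theorem pairwiseMRF_update (k : V) (g : X k → ℝ) (x : (i : V) → X i) :
    pairwiseMRF ψ2 hψ E c (update φ k g) x = g (x k) * pairwiseMRF ψ2 hψ E c (update φ k 1) x := by
  simp only [pairwiseMRF, prod_update_apply_of_mem φ _ (mem_univ k), Pi.one_apply]
  ring

theorem pairwiseMRF_eq_mul_update_one (k : V) (x : (i : V) → X i) :
    pairwiseMRF ψ2 hψ E c φ x = φ k (x k) * pairwiseMRF ψ2 hψ E c (update φ k 1) x := by
  conv_lhs => rw [← update_eq_self k φ]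
  exact pairwiseMRF_update E c φ k (φ k) x

theorem pairwiseMRF_update_one_apply_update {ℓ : V} (hℓ : ∀ e ∈ E, ℓ ∉ e) (x : (i : V) → X i)
    (b : X ℓ) :
    pairwiseMRF ψ2 hψ E c (update φ ℓ 1) (update x ℓ b) =
      pairwiseMRF ψ2 hψ E c (update φ ℓ 1) x := by
  have hedge : ∏ e ∈ E, edgeValue ψ2 hψ (update x ℓ b) e = ∏ e ∈ E, edgeValue ψ2 hψ x e :=
    prod_congr rfl fun e he => edgeValue_update_of_notMem ψ2 hψ (hℓ e he) x b
  have hvert : ∏ i ∈ univ.erase ℓ, φ i (update x ℓ b i) = ∏ i ∈ univ.erase ℓ, φ i (x i) :=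
    prod_congr rfl fun i hi => by rw [update_of_ne (ne_of_mem_erase hi)]
  simp only [pairwiseMRF, prod_update_apply_of_mem φ _ (mem_univ ℓ), hedge, hvert, Pi.one_apply]

theorem pairwiseMRF_eq_mul_of_mem {ℓ u : V} (he : s(ℓ, u) ∈ E) (x : (i : V) → X i) :
    pairwiseMRF ψ2 hψ E c φ x =
      ψ2 ℓ u (x ℓ) (x u) * φ ℓ (x ℓ) * pairwiseMRF ψ2 hψ (E.erase s(ℓ, u)) c (update φ ℓ 1) x := by
  rw [mul_assoc, ← pairwiseMRF_eq_mul_update_one, pairwiseMRF, pairwiseMRF, ← mul_prod_erase E _ he,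
    edgeValue_mk]
  ring

end

theorem pairwiseMRF_empty_eq_prod_marg1 (hZ : ∑ x, pairwiseMRF ψ2 hψ ∅ c φ x = 1)
    (x : (i : V) → X i) :
    pairwiseMRF ψ2 hψ ∅ c φ x = ∏ i, marg1 (pairwiseMRF ψ2 hψ ∅ c φ) i (x i) := by
  set p := pairwiseMRF ψ2 hψ ∅ c φ
  have hmarg1 (i : V) : marg1 p i (x i) * ∑ b, φ i b = φ i (x i) := by
    rw [← mul_one (φ i (x i)), ← hZ]
    exact sum_filter_mul_sum_eq_mul_sum (by simp)
      (fun y _ => pairwiseMRF_eq_mul_update_one _ _ _ i y)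
      (pairwiseMRF_update_one_apply_update ∅ c φ (by simp)) (x i)
  have hZprod : c * ∏ i, ∑ b, φ i b = 1 := by
    rw [← hZ, prod_univ_sum, Fintype.piFinset_univ, mul_sum]
    simp [p, pairwiseMRF]
  calc p x = c * ∏ i, φ i (x i) := by simp [p, pairwiseMRF]
    _ = (c * ∏ i, ∑ b, φ i b) * ∏ i, marg1 p i (x i) := by
      simp only [← hmarg1, prod_mul_distrib]; ring
    _ = _ := by rw [hZprod, one_mul]

theorem decouple_pairwiseMRF {ℓ u : V} (hℓu : ℓ ≠ u) (he : s(ℓ, u) ∈ E)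
    (hℓ : ∀ e ∈ E.erase s(ℓ, u), ℓ ∉ e) :
    decouple (pairwiseMRF ψ2 hψ E c φ) ℓ = pairwiseMRF ψ2 hψ (E.erase s(ℓ, u)) c
      -- the potential at `u` absorbs the message `∑ s, ψ2 ℓ u s t * φ ℓ s` from the leaf `ℓ`
      (update (update φ u fun t => φ u t * ∑ s, ψ2 ℓ u s t * φ ℓ s) ℓ
        (marg1 (pairwiseMRF ψ2 hψ E c φ) ℓ)) := by
  funext x
  rw [decouple, sumOut_eq_mul hℓu.symm (a := fun s t => ψ2 ℓ u s t * φ ℓ s)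
      (pairwiseMRF_eq_mul_of_mem E c φ he) (pairwiseMRF_update_one_apply_update _ c φ hℓ),
    pairwiseMRF_eq_mul_update_one _ c (update φ ℓ 1) u, update_of_ne hℓu.symm]
  conv_rhs => rw [pairwiseMRF_update, update_comm hℓu.symm, pairwiseMRF_update]
  ring

end PairwiseMRF

section

variable {ψ2 : (i j : V) → X i → X j → ℝ} {hψ : ∀ i j s t, ψ2 i j s t = ψ2 j i t s}

theorem SimpleGraph.IsAcyclic.mul_prod_marg1_pow_degree {F : SimpleGraph V} [DecidableRel F.Adj]
    (hF : F.IsAcyclic) {c : ℝ} {φ : (i : V) → X i → ℝ} {p : ((i : V) → X i) → ℝ}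
    (hp : p = pairwiseMRF ψ2 hψ F.edgeFinset c φ) (hp1 : ∑ x, p x = 1) (x : (i : V) → X i) :
    p x * ∏ i, marg1 p i (x i) ^ F.degree i =
      (∏ e ∈ F.edgeFinset, edgeValue (marg2 p) (marg2_symm p) x e) * ∏ i, marg1 p i (x i) := by
  obtain ⟨n, hn⟩ : ∃ n, #F.edgeFinset = n := ⟨_, rfl⟩
  induction n generalizing F φ p x with
  | zero =>
    have hE : F.edgeFinset = ∅ := card_eq_zero.mp hn
    rw [F.prod_pow_degree, hE, prod_empty, prod_empty, mul_one, one_mul]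
    rw [hE] at hp
    subst hp
    exact pairwiseMRF_empty_eq_prod_marg1 c φ hp1 x
  | succ n ih =>
    obtain ⟨ℓ, u, he, hℓ⟩ := hF.exists_leaf_edge (card_pos.mp (by omega))
    have hℓu : ℓ ≠ u := (mem_edgeFinset.mp he).ne
    classical
    set F' := F.deleteEdges {s(ℓ, u)}
    have hE' : F'.edgeFinset = F.edgeFinset.erase s(ℓ, u) := F.edgeFinset_deleteEdges_singleton _
    have hmarkov := mul_marg1_eq_marg2_mul_sumOut hℓu.symm (a := fun s t => ψ2 ℓ u s t * φ ℓ s)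
      (hp ▸ pairwiseMRF_eq_mul_of_mem _ c φ he) (pairwiseMRF_update_one_apply_update _ c φ hℓ) x
    have hih := ih (F := F') (hF.anti (deleteEdges_le _))
      (hE' ▸ hp ▸ decouple_pairwiseMRF _ c φ hℓu he hℓ) (sum_decouple hp1) x
      (by rw [hE', card_erase_of_mem he, hn]; rfl)
    rw [hE', prod_congr rfl fun e he => edgeValue_marg2_decouple hp1 (hℓ e he) x] at hih
    simp only [marg1_decouple hp1, decouple] at hih
    rw [F.prod_pow_degree_eq_mul_prod_pow_degree_deleteEdges he, ← mul_prod_erase _ _ he,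
      edgeValue_mk]
    linear_combination (marg1 p ℓ (x ℓ) * ∏ i, marg1 p i (x i) ^ F'.degree i) * hmarkov +
      marg2 p ℓ u (x ℓ) (x u) * hih

open Real

variable (G : SimpleGraph V) [DecidableRel G.Adj] (p : ((i : V) → X i) → ℝ)

theorem betheFreeEnergy_marg_eq_sum :
    betheFreeEnergy G (marg1 p) (marg2 p) ψ2 (marg2_symm p) hψ =
      ∑ x, p x * (∑ e ∈ G.edgeFinset,
          log (edgeValue (marg2 p) (marg2_symm p) x e / edgeValue ψ2 hψ x e) -
        ∑ i, ((G.degree i : ℝ) - 1) * log (marg1 p i (x i))) := by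
  have hedge (e : Sym2 V) : Sym2.lift ⟨fun i j => ∑ s : X i, ∑ t : X j,
        marg2 p i j s t * log (marg2 p i j s t / ψ2 i j s t),
        betheEdgeTerm_symm (marg2 p) ψ2 (marg2_symm p) hψ⟩ e =
      ∑ x, p x * log (edgeValue (marg2 p) (marg2_symm p) x e / edgeValue ψ2 hψ x e) := by
    induction e using Sym2.ind with
    | _ i j => exact sum_marg2_mul p i j fun s t => log (marg2 p i j s t / ψ2 i j s t)
  simp only [betheFreeEnergy, hedge, sum_marg1_mul p _ fun s => log (marg1 p _ s), mul_sub,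
    mul_sum, sum_sub_distrib]
  rw [sum_comm, sum_comm (s := univ) (t := univ)]
  congr 1
  exact sum_congr rfl fun _ _ => sum_congr rfl fun _ _ => by ring

variable {G p}

theorem betheFreeEnergy_marg_eq_of_factorization (hpos : ∀ x, 0 < p x)
    (hψpos : ∀ i j, G.Adj i j → ∀ s t, 0 < ψ2 i j s t)
    (hfac : ∀ x, p x * ∏ i, marg1 p i (x i) ^ G.degree i =
      (∏ e ∈ G.edgeFinset, edgeValue (marg2 p) (marg2_symm p) x e) * ∏ i, marg1 p i (x i)) :
    betheFreeEnergy G (marg1 p) (marg2 p) ψ2 (marg2_symm p) hψ =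
      ∑ x, p x * log (p x / ∏ e ∈ G.edgeFinset, edgeValue ψ2 hψ x e) := by
  rw [betheFreeEnergy_marg_eq_sum]
  refine sum_congr rfl fun x _ => congrArg _ ?_
  have hm (i : V) : marg1 p i (x i) ≠ 0 := (marg1_pos hpos i x).ne'
  have hP (e : Sym2 V) : edgeValue (marg2 p) (marg2_symm p) x e ≠ 0 :=
    (edgeValue_pos fun i j _ => marg2_pos hpos i j x).ne'
  have hΨ : ∀ e ∈ G.edgeFinset, edgeValue ψ2 hψ x e ≠ 0 := fun e he =>
    (edgeValue_pos_of_mem_edgeFinset hψpos x he).ne'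
  have hlog := congrArg log (hfac x)
  rw [log_mul (hpos x).ne' (prod_ne_zero_iff.mpr fun i _ => pow_ne_zero _ (hm i)),
    log_mul (prod_ne_zero_iff.mpr fun e _ => hP e) (prod_ne_zero_iff.mpr fun i _ => hm i),
    log_prod fun i _ => pow_ne_zero _ (hm i), log_prod fun e _ => hP e,
    log_prod fun i _ => hm i] at hlog
  rw [log_div (hpos x).ne' (prod_ne_zero_iff.mpr hΨ), log_prod hΨ,
    sum_congr rfl fun e he => log_div (hP e) (hΨ e he)]
  simp only [log_pow, sub_mul, one_mul, sum_sub_distrib] at hlog ⊢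
  linear_combination -hlog

end

theorem betheFreeEnergy_exact_marginals_general (V : Type*) [Fintype V] [DecidableEq V]
    (X : V → Type*) [∀ i, Fintype (X i)] [∀ i, Nonempty (X i)] [∀ i, DecidableEq (X i)]
    (T : SimpleGraph V) [DecidableRel T.Adj] (hT : T.IsTree)
    (ψ2 : (i j : V) → X i → X j → ℝ)
    (hψsym : ∀ i j s t, ψ2 i j s t = ψ2 j i t s)
    (hψpos : ∀ i j, T.Adj i j → ∀ s t, 0 < ψ2 i j s t)
    (ptil : ((i : V) → X i) → ℝ)
    (hptil : ∀ x, ptil x = ∏ e ∈ T.edgeFinset,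
      Sym2.lift ⟨fun i j => ψ2 i j (x i) (x j), fun i j => hψsym i j (x i) (x j)⟩ e)
    (p : ((i : V) → X i) → ℝ)
    (hp : ∀ x, p x = ptil x / ∑ y : (i : V) → X i, ptil y) :
    betheFreeEnergy T (marg1 p) (marg2 p) ψ2 (marg2_symm p) hψsym
      = -Real.log (∑ y : (i : V) → X i, ptil y) := by
  set Z := ∑ y, ptil y
  have hptil' (x : (i : V) → X i) : ptil x = ∏ e ∈ T.edgeFinset, edgeValue ψ2 hψsym x e :=
    hptil x
  have hptil_pos (x : (i : V) → X i) : 0 < ptil x :=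
    hptil' x ▸ prod_pos fun e he => edgeValue_pos_of_mem_edgeFinset hψpos x he
  have hZ : 0 < Z := sum_pos (fun y _ => hptil_pos y) univ_nonempty
  have hpos (x : (i : V) → X i) : 0 < p x := hp x ▸ div_pos (hptil_pos x) hZ
  have hp1 : ∑ x, p x = 1 := by
    simp_rw [hp, ← sum_div]
    exact div_self hZ.ne'
  have hmrf : p = pairwiseMRF ψ2 hψsym T.edgeFinset Z⁻¹ fun _ _ => 1 := by
    funext x
    simp [pairwiseMRF, hp, hptil', div_eq_inv_mul]
  have hratio (x : (i : V) → X i) : p x / ∏ e ∈ T.edgeFinset, edgeValue ψ2 hψsym x e = Z⁻¹ := by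
    rw [← hptil' x, hp, div_div_cancel_left' (hptil_pos x).ne']
  rw [betheFreeEnergy_marg_eq_of_factorization hpos hψpos
    (hT.isAcyclic.mul_prod_marg1_pow_degree hmrf hp1)]
  simp_rw [hratio, Real.log_inv, ← sum_mul, hp1, one_mul]

/-- **The Bethe free energy at the exact marginals of a tree MRF equals the
negative log-partition function.**
Let `p(x) = p̃(x)/Z` be the pairwise Markov random field on the tree `T`,
where `p̃(x) = Π_{{i,j}∈E(T)} ψ_{ij}(x_i, x_j)` with strictly positive
symmetric edge potentials and `Z = Σ_x p̃(x)`.  Then the Bethe free energy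
evaluated at the exact single-variable and pairwise marginals of `p` equals
`-ln Z`. -/
theorem betheFreeEnergy_exact_marginals (V : Type*) [Fintype V] [DecidableEq V] [Nonempty V]
    (X : V → Type*) [∀ i, Fintype (X i)] [∀ i, Nonempty (X i)] [∀ i, DecidableEq (X i)]
    (T : SimpleGraph V) [DecidableRel T.Adj] (hT : T.IsTree)
    (ψ2 : (i j : V) → X i → X j → ℝ)
    (hψsym : ∀ i j s t, ψ2 i j s t = ψ2 j i t s)
    (hψpos : ∀ i j, T.Adj i j → ∀ s t, 0 < ψ2 i j s t)
    (ptil : ((i : V) → X i) → ℝ)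
    (hptil : ∀ x, ptil x = ∏ e ∈ T.edgeFinset,
      Sym2.lift ⟨fun i j => ψ2 i j (x i) (x j), fun i j => hψsym i j (x i) (x j)⟩ e)
    (p : ((i : V) → X i) → ℝ)
    (hp : ∀ x, p x = ptil x / ∑ y : (i : V) → X i, ptil y) :
    betheFreeEnergy T (marg1 p) (marg2 p) ψ2 (marg2_symm p) hψsym
      = -Real.log (∑ y : (i : V) → X i, ptil y) :=
  betheFreeEnergy_exact_marginals_general V X T hT ψ2 hψsym hψpos ptil hptil p hp
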